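/- Define the Berry–Plotkin function BP : 𝔹³ → 𝔹 by: BP(x) = tt if (⊥,tt,ff) ≤ x; BP(x) = ff if (tt,ff,⊥) ≤ x or (ff,⊥,tt) ≤ x; and BP(x) = ⊥ otherwise. Then BP is monotone, π₁(tr BP) = {(⊥,tt,ff), (tt,ff,⊥), (ff,⊥,tt)}, and cc(BP) = bcc(BP) = 3 (i.e. BP has presequentiality level (2,2)). -/

import Mathlib

/-- The flat boolean domain: `⊥`, `tt`, `ff`. -/
abbrev Bb : Type := WithBot Bool

/-- The flat (domain) order on `Bb`: `⊥` below everything, `tt` and `ff` incomparable. -/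
def bLE (a b : Bb) : Prop := a = ⊥ ∨ a = b

/-- Pointwise flat order on tuples. -/
def tupLE {k : ℕ} (x y : Fin k → Bb) : Prop := ∀ i, bLE (x i) (y i)

/-- Strict pointwise flat order on tuples. -/
def tupLT {k : ℕ} (x y : Fin k → Bb) : Prop := tupLE x y ∧ x ≠ y

/-- A first-order boolean function is monotone for the flat order. -/
def FlatMono {k : ℕ} (f : (Fin k → Bb) → Bb) : Prop :=
  ∀ x y, tupLE x y → bLE (f x) (f y)

/-- The presequentiality relation `P^n_{A,B}` (indices `0,…,n-1`). -/
def Preseq (n : ℕ) (A B : Finset ℕ) : Set (Fin n → Bb) :=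
  {d | (∃ i : Fin n, (i : ℕ) ∈ A ∧ d i = ⊥) ∨
       (∀ i j : Fin n, (i : ℕ) ∈ B → (j : ℕ) ∈ B → d i = d j)}

/-- `P^n_{m,m'}`: the presequentiality relation on initial segments. -/
def PreseqSeg (n m m' : ℕ) : Set (Fin n → Bb) :=
  Preseq n (Finset.range m) (Finset.range m')

/-- `f` (arity `k`) is invariant under an `n`-ary relation `R`. -/
def Invariant {k n : ℕ} (f : (Fin k → Bb) → Bb) (R : Set (Fin n → Bb)) : Prop :=
  ∀ x : Fin k → Fin n → Bb, (∀ m, x m ∈ R) →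
    (fun i => f (fun m => x m i)) ∈ R

/-- `π₁(tr f)`: the set of minimal points where `f` is defined. -/
def traceDom {k : ℕ} (f : (Fin k → Bb) → Bb) : Set (Fin k → Bb) :=
  {v | f v ≠ ⊥ ∧ ∀ v', tupLT v' v → f v' = ⊥}

/-- Linear coherence of a set of tuples. -/
def LinCoherent {k : ℕ} (S : Set (Fin k → Bb)) : Prop :=
  ∀ j : Fin k, (∀ v ∈ S, v j ≠ ⊥) → ∀ v ∈ S, ∀ w ∈ S, v j = w j

/-- The coefficient of coherence `cc(f) ∈ ℕ∞`. -/
noncomputable def cc {k : ℕ} (f : (Fin k → Bb) → Bb) : ℕ∞ :=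
  sInf {c : ℕ∞ | ∃ S : Finset (Fin k → Bb),
    ↑S ⊆ traceDom f ∧ 2 ≤ S.card ∧ LinCoherent (↑S : Set (Fin k → Bb)) ∧ c = (S.card : ℕ∞)}

/-- The bivalued coefficient of coherence `bcc(f) ∈ ℕ∞`. -/
noncomputable def bcc {k : ℕ} (f : (Fin k → Bb) → Bb) : ℕ∞ :=
  sInf {c : ℕ∞ | ∃ S : Finset (Fin k → Bb),
    ↑S ⊆ traceDom f ∧ 3 ≤ S.card ∧ LinCoherent (↑S : Set (Fin k → Bb)) ∧
    (∃ v ∈ S, f v = ((true : Bool) : Bb)) ∧ (∃ v ∈ S, f v = ((false : Bool) : Bb)) ∧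
    c = (S.card : ℕ∞)}

/-- M-sequentiality, by induction on the arity. -/
def MSeq : ∀ {k : ℕ}, ((Fin k → Bb) → Bb) → Prop
  | 0, f => ∃ b, ∀ x, f x = b
  | (k+1), f => (∃ b, ∀ x, f x = b) ∨
      ∃ i : Fin (k+1), (∀ x, x i = ⊥ → f x = ⊥) ∧
        ∀ c : Bool, MSeq (fun x : Fin k → Bb => f (i.insertNth (c : Bb) x))

/-- First trace element of the Berry–Plotkin function. -/
def bp1 : Fin 3 → Bb := ![⊥, ((true : Bool) : Bb), ((false : Bool) : Bb)]
/-- Second trace element of the Berry–Plotkin function. -/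
def bp2 : Fin 3 → Bb := ![((true : Bool) : Bb), ((false : Bool) : Bb), ⊥]
/-- Third trace element of the Berry–Plotkin function. -/
def bp3 : Fin 3 → Bb := ![((false : Bool) : Bb), ⊥, ((true : Bool) : Bb)]

open Classical in
/-- The Berry–Plotkin function. -/
noncomputable def BP : (Fin 3 → Bb) → Bb := fun x =>
  if tupLE bp1 x then ((true : Bool) : Bb)
  else if tupLE bp2 x ∨ tupLE bp3 x then ((false : Bool) : Bb)
  else ⊥

/-!
The three minimal points `bp1`, `bp2`, `bp3` of `BP` pairwise conflict: any two of them are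
both defined, with different values, at some coordinate. So no two of them form a linearly
coherent set. The three together do, because every coordinate is `⊥` in one of them, and they
carry both values `tt` and `ff`. Hence `cc BP = bcc BP = 3`.
-/

instance (a b : Bb) : Decidable (bLE a b) := inferInstanceAs (Decidable (a = ⊥ ∨ a = b))

instance {k : ℕ} (x y : Fin k → Bb) : Decidable (tupLE x y) :=
  inferInstanceAs (Decidable (∀ i, bLE (x i) (y i)))

section FlatOrder

theorem bLE_refl (a : Bb) : bLE a a := Or.inr rfl

theorem bLE_trans {a b c : Bb} (hab : bLE a b) (hbc : bLE b c) : bLE a c := by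
  rcases hab with rfl | rfl
  · exact Or.inl rfl
  · exact hbc

theorem bLE_antisymm {a b : Bb} (hab : bLE a b) (hba : bLE b a) : a = b := by
  rcases hab with rfl | rfl
  · rcases hba with rfl | rfl <;> rfl
  · rfl

theorem bLE_coe_iff {b : Bool} {c : Bb} : bLE b c ↔ c = b := by
  simp [bLE, eq_comm]

theorem bLE_of_ne_bot_imp {a b : Bb} (h : a ≠ ⊥ → b = a) : bLE a b := by
  by_cases ha : a = ⊥
  · exact Or.inl ha
  · exact Or.inr (h ha).symm

variable {k : ℕ}

theorem tupLE_refl (x : Fin k → Bb) : tupLE x x := fun i => bLE_refl (x i)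

theorem tupLE_trans {x y z : Fin k → Bb} (hxy : tupLE x y) (hyz : tupLE y z) : tupLE x z :=
  fun i => bLE_trans (hxy i) (hyz i)

theorem tupLE_antisymm {x y : Fin k → Bb} (hxy : tupLE x y) (hyx : tupLE y x) : x = y :=
  funext fun i => bLE_antisymm (hxy i) (hyx i)

end FlatOrder

section Trace

variable {k : ℕ}

theorem traceDom_eq_of_antichain {f : (Fin k → Bb) → Bb} {T : Set (Fin k → Bb)}
    (hf : ∀ v, f v ≠ ⊥ ↔ ∃ u ∈ T, tupLE u v)
    (hT : ∀ u ∈ T, ∀ w ∈ T, tupLE u w → u = w) : traceDom f = T := by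
  ext v
  constructor
  · rintro ⟨hv, hmin⟩
    obtain ⟨u, hu, huv⟩ := (hf v).1 hv
    by_cases heq : u = v
    · exact heq ▸ hu
    · exact absurd (hmin u ⟨huv, heq⟩) ((hf u).2 ⟨u, hu, tupLE_refl u⟩)
  · intro hv
    refine ⟨(hf v).2 ⟨v, hv, tupLE_refl v⟩, fun v' ⟨hle, hne⟩ => ?_⟩
    by_contra hv'
    obtain ⟨u, hu, huv'⟩ := (hf v').1 hv'
    obtain rfl := hT u hu v hv (tupLE_trans huv' hle)
    exact hne (tupLE_antisymm hle huv')

theorem linCoherent_of_forall_exists_bot {S : Set (Fin k → Bb)}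
    (h : ∀ j, ∃ v ∈ S, v j = ⊥) : LinCoherent S := fun j hj => by
  obtain ⟨v, hv, hvj⟩ := h j
  exact absurd hvj (hj v hv)

theorem cc_le_card {f : (Fin k → Bb) → Bb} {S : Finset (Fin k → Bb)}
    (hS : ↑S ⊆ traceDom f) (hcard : 2 ≤ S.card) (hcoh : LinCoherent (S : Set (Fin k → Bb))) :
    cc f ≤ S.card :=
  sInf_le ⟨S, hS, hcard, hcoh, rfl⟩

theorem bcc_le_card {f : (Fin k → Bb) → Bb} {S : Finset (Fin k → Bb)}
    (hS : ↑S ⊆ traceDom f) (hcard : 3 ≤ S.card) (hcoh : LinCoherent (S : Set (Fin k → Bb)))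
    (htt : ∃ v ∈ S, f v = ((true : Bool) : Bb)) (hff : ∃ v ∈ S, f v = ((false : Bool) : Bb)) :
    bcc f ≤ S.card :=
  sInf_le ⟨S, hS, hcard, hcoh, htt, hff, rfl⟩

theorem three_le_bcc (f : (Fin k → Bb) → Bb) : 3 ≤ bcc f :=
  le_sInf <| by
    rintro c ⟨S, -, hcard, -, -, -, rfl⟩
    exact_mod_cast hcard

theorem three_le_cc_of_conflict {f : (Fin k → Bb) → Bb}
    (h : ∀ v ∈ traceDom f, ∀ w ∈ traceDom f, v ≠ w → ∃ j, v j ≠ ⊥ ∧ w j ≠ ⊥ ∧ v j ≠ w j) :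
    3 ≤ cc f :=
  le_sInf <| by
    rintro c ⟨S, hS, hcard, hcoh, rfl⟩
    suffices S.card ≠ 2 by exact_mod_cast (show 3 ≤ S.card by omega)
    intro hS2
    obtain ⟨v, w, hvw, rfl⟩ := Finset.card_eq_two.1 hS2
    have hv : v ∈ (↑({v, w} : Finset _) : Set (Fin k → Bb)) := by simp
    have hw : w ∈ (↑({v, w} : Finset _) : Set (Fin k → Bb)) := by simp
    obtain ⟨j, hvj, hwj, hne⟩ := h v (hS hv) w (hS hw) hvw
    refine hne (hcoh j ?_ v hv w hw)
    simp [hvj, hwj]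

end Trace

section BerryPlotkin

theorem not_tupLE_bp1_of_tupLE_bp2 {v : Fin 3 → Bb} (h2 : tupLE bp2 v) : ¬ tupLE bp1 v :=
  fun h1 => absurd ((bLE_coe_iff.1 (h1 1)).symm.trans (bLE_coe_iff.1 (h2 1))) (by decide)

theorem not_tupLE_bp1_of_tupLE_bp3 {v : Fin 3 → Bb} (h3 : tupLE bp3 v) : ¬ tupLE bp1 v :=
  fun h1 => absurd ((bLE_coe_iff.1 (h3 2)).symm.trans (bLE_coe_iff.1 (h1 2))) (by decide)

theorem BP_of_tupLE_bp1 {v : Fin 3 → Bb} (h : tupLE bp1 v) : BP v = ((true : Bool) : Bb) :=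
  if_pos h

theorem BP_of_tupLE_bp2 {v : Fin 3 → Bb} (h : tupLE bp2 v) : BP v = ((false : Bool) : Bb) := by
  rw [BP, if_neg (not_tupLE_bp1_of_tupLE_bp2 h), if_pos (Or.inl h)]

theorem BP_of_tupLE_bp3 {v : Fin 3 → Bb} (h : tupLE bp3 v) : BP v = ((false : Bool) : Bb) := by
  rw [BP, if_neg (not_tupLE_bp1_of_tupLE_bp3 h), if_pos (Or.inr h)]

theorem BP_ne_bot_iff (v : Fin 3 → Bb) :
    BP v ≠ ⊥ ↔ ∃ u ∈ ({bp1, bp2, bp3} : Set (Fin 3 → Bb)), tupLE u v := by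
  simp only [Set.mem_insert_iff, Set.mem_singleton_iff, exists_eq_or_imp, exists_eq_left, BP]
  split_ifs <;> simp_all

theorem flatMono_BP : FlatMono BP := by
  intro x y hxy
  refine bLE_of_ne_bot_imp fun hx => ?_
  obtain ⟨u, hu, hux⟩ := (BP_ne_bot_iff x).1 hx
  have huy := tupLE_trans hux hxy
  simp only [Set.mem_insert_iff, Set.mem_singleton_iff] at hu
  rcases hu with rfl | rfl | rfl
  · rw [BP_of_tupLE_bp1 hux, BP_of_tupLE_bp1 huy]
  · rw [BP_of_tupLE_bp2 hux, BP_of_tupLE_bp2 huy]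
  · rw [BP_of_tupLE_bp3 hux, BP_of_tupLE_bp3 huy]

theorem traceDom_BP : traceDom BP = {bp1, bp2, bp3} := by
  refine traceDom_eq_of_antichain BP_ne_bot_iff ?_
  simp only [Set.mem_insert_iff, Set.mem_singleton_iff]
  rintro u (rfl | rfl | rfl) w (rfl | rfl | rfl) h <;> first | rfl | exact absurd h (by decide)

theorem traceDom_BP_conflict :
    ∀ v ∈ traceDom BP, ∀ w ∈ traceDom BP, v ≠ w → ∃ j, v j ≠ ⊥ ∧ w j ≠ ⊥ ∧ v j ≠ w j := by
  simp only [traceDom_BP, Set.mem_insert_iff, Set.mem_singleton_iff]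
  rintro v (rfl | rfl | rfl) w (rfl | rfl | rfl) h <;> first | exact absurd rfl h | decide

theorem card_bp : ({bp1, bp2, bp3} : Finset (Fin 3 → Bb)).card = 3 := by
  decide

theorem coe_bp_subset_traceDom_BP :
    ↑({bp1, bp2, bp3} : Finset (Fin 3 → Bb)) ⊆ traceDom BP := by
  simp [traceDom_BP]

theorem linCoherent_bp :
    LinCoherent (↑({bp1, bp2, bp3} : Finset (Fin 3 → Bb)) : Set (Fin 3 → Bb)) :=
  linCoherent_of_forall_exists_bot fun j => by
    fin_cases j
    · exact ⟨bp1, by simp, rfl⟩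
    · exact ⟨bp3, by simp, rfl⟩
    · exact ⟨bp2, by simp, rfl⟩

end BerryPlotkin

/-- the Berry–Plotkin function is monotone, its trace domain is
`{bp1, bp2, bp3}`, and `cc BP = bcc BP = 3`. -/
theorem stmt_19 :
    FlatMono BP ∧
    traceDom BP = {bp1, bp2, bp3} ∧
    cc BP = ((3 : ℕ) : ℕ∞) ∧ bcc BP = ((3 : ℕ) : ℕ∞) := by
  refine ⟨flatMono_BP, traceDom_BP, le_antisymm ?_ ?_, le_antisymm ?_ (three_le_bcc BP)⟩
  · simpa [card_bp] using
      cc_le_card coe_bp_subset_traceDom_BP (by rw [card_bp]; norm_num) linCoherent_bp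
  · exact_mod_cast three_le_cc_of_conflict traceDom_BP_conflict
  · have htt : BP bp1 = ((true : Bool) : Bb) := BP_of_tupLE_bp1 (tupLE_refl bp1)
    have hff : BP bp2 = ((false : Bool) : Bb) := BP_of_tupLE_bp2 (tupLE_refl bp2)
    simpa [card_bp] using
      bcc_le_card coe_bp_subset_traceDom_BP card_bp.ge linCoherent_bp
        ⟨bp1, by simp, htt⟩ ⟨bp2, by simp, hff⟩
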